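/- arXiv:1908.11769 — 4 statements merged into one kernel-verified Lean document; each statement's English description precedes it below -/
import Mathlib

section
/- The synchronous composition of plain transition structures is associative up to equivalence: for criteria Y ⊆ P1 × P2, Y' ⊆ P2 × P3, we have (T1 ∥_Y T2) ∥_{Y'} T3 ≡ T1 ∥_Y (T2 ∥_{Y'} T3), where in each expression the criteria are regarded as criteria between the appropriate (inherited) property sets. -/
/-- A plain transition structure with property set (index type) `P` and
property values in `V`: properties are partial functions, modelled with
`Option`. -/
structure PTS (V : Type) (P : Type) where
  Q : Type
  isState : Q → Prop
  step : Q → Q → Prop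
  val : P → Q → Option V
  init : Q

namespace PTS
variable {V P P1 P2 P3 : Type}

/-- Compatibility of a pair of component states with respect to the
synchronisation criteria `Y`: for every criterion, the two property values
agree whenever both are defined. -/
def compatible (T1 : PTS V P1) (T2 : PTS V P2) (Y : Set (P1 × P2))
    (q : T1.Q × T2.Q) : Prop :=
  T1.isState q.1 ∧ T2.isState q.2 ∧
    ∀ pp ∈ Y, ∀ v1 v2, T1.val pp.1 q.1 = some v1 → T2.val pp.2 q.2 = some v2 → v1 = v2

/-- Synchronous composition of plain transition structures with respect to
synchronisation criteria `Y`: states are the compatible pairs, a step lets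
either component or both step, properties are inherited componentwise, and
the initial state is the pair of initial states. -/
def comp (T1 : PTS V P1) (T2 : PTS V P2) (Y : Set (P1 × P2)) : PTS V (P1 ⊕ P2) where
  Q := T1.Q × T2.Q
  isState := compatible T1 T2 Y
  step q q' := compatible T1 T2 Y q ∧ compatible T1 T2 Y q' ∧
    (T1.step q.1 q'.1 ∨ q.1 = q'.1) ∧ (T2.step q.2 q'.2 ∨ q.2 = q'.2) ∧
    ¬(q.1 = q'.1 ∧ q.2 = q'.2)
  val p q := Sum.elim (fun a => T1.val a q.1) (fun b => T2.val b q.2) p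
  init := (T1.init, T2.init)

/-- Equivalence of plain transition structures: bijections of states and of
properties preserving states, adjacency, property values (codomains are
shared), and initial states. -/
def Equiv (T1 : PTS V P1) (T2 : PTS V P2) : Prop :=
  ∃ (f : T1.Q ≃ T2.Q) (F : P1 ≃ P2),
    (∀ q, T1.isState q ↔ T2.isState (f q)) ∧
    (∀ q q', T1.step q q' ↔ T2.step (f q) (f q')) ∧
    (∀ p q, T1.val p q = T2.val (F p) (f q)) ∧
    f T1.init = T2.init

/-!
Reassociating state triples and property sums identifies the two nestings: in both, a state is a
triple compatible for `Y` on its first two components and for `Y'` on its last two (the lifted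
criteria only ever compare values of the middle component), and a step moves some nonempty set of
components, each along its own adjacency.
-/

section Assoc
variable {V P1 P2 P3 : Type} (T1 : PTS V P1) (T2 : PTS V P2) (T3 : PTS V P3)
  (Y : Set (P1 × P2)) (Y' : Set (P2 × P3))

def inrCriteria : Set ((P1 ⊕ P2) × P3) := {pp | ∃ p2 p3, (p2, p3) ∈ Y' ∧ pp = (Sum.inr p2, p3)}

def inlCriteria : Set (P1 × (P2 ⊕ P3)) := {pp | ∃ p1 p2, (p1, p2) ∈ Y ∧ pp = (p1, Sum.inl p2)}

theorem compatible_comp_left_iff (q1 : T1.Q) (q2 : T2.Q) (q3 : T3.Q) :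
    compatible (T1.comp T2 Y) T3 (inrCriteria (P1 := P1) Y') ((q1, q2), q3) ↔
      compatible T1 T2 Y (q1, q2) ∧ compatible T2 T3 Y' (q2, q3) := by
  constructor
  · rintro ⟨h12, h3, hY'⟩
    exact ⟨h12, h12.2.1, h3, fun pp hpp => hY' (Sum.inr pp.1, pp.2) ⟨pp.1, pp.2, hpp, rfl⟩⟩
  · rintro ⟨h12, -, h3, hY'⟩
    refine ⟨h12, h3, ?_⟩
    rintro _ ⟨p2, p3, hp, rfl⟩
    exact hY' (p2, p3) hp

theorem compatible_comp_right_iff (q1 : T1.Q) (q2 : T2.Q) (q3 : T3.Q) :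
    compatible T1 (T2.comp T3 Y') (inlCriteria (P3 := P3) Y) (q1, (q2, q3)) ↔
      compatible T1 T2 Y (q1, q2) ∧ compatible T2 T3 Y' (q2, q3) := by
  constructor
  · rintro ⟨h1, h23, hY⟩
    exact ⟨⟨h1, h23.1, fun pp hpp => hY (pp.1, Sum.inl pp.2) ⟨pp.1, pp.2, hpp, rfl⟩⟩, h23⟩
  · rintro ⟨⟨h1, -, hY⟩, h23⟩
    refine ⟨h1, h23, ?_⟩
    rintro _ ⟨p1, p2, hp, rfl⟩
    exact hY (p1, p2) hp

theorem comp_step_or_eq_iff {q q' : (T1.comp T2 Y).Q} (hq : compatible T1 T2 Y q)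
    (hq' : compatible T1 T2 Y q') :
    (T1.comp T2 Y).step q q' ∨ q = q' ↔
      (T1.step q.1 q'.1 ∨ q.1 = q'.1) ∧ (T2.step q.2 q'.2 ∨ q.2 = q'.2) := by
  obtain ⟨q1, q2⟩ := q
  obtain ⟨q1', q2'⟩ := q'
  by_cases heq : q1 = q1' ∧ q2 = q2'
  · obtain ⟨rfl, rfl⟩ := heq
    exact iff_of_true (Or.inr rfl) ⟨Or.inr rfl, Or.inr rfl⟩
  · simp only [comp, Prod.mk.injEq, heq, or_false]
    tauto

theorem step_comp_left_iff (q1 q1' : T1.Q) (q2 q2' : T2.Q) (q3 q3' : T3.Q) :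
    ((T1.comp T2 Y).comp T3 (inrCriteria (P1 := P1) Y')).step ((q1, q2), q3) ((q1', q2'), q3') ↔
      (compatible T1 T2 Y (q1, q2) ∧ compatible T2 T3 Y' (q2, q3)) ∧
      (compatible T1 T2 Y (q1', q2') ∧ compatible T2 T3 Y' (q2', q3')) ∧
      (T1.step q1 q1' ∨ q1 = q1') ∧ (T2.step q2 q2' ∨ q2 = q2') ∧ (T3.step q3 q3' ∨ q3 = q3') ∧
      ¬(q1 = q1' ∧ q2 = q2' ∧ q3 = q3') := by
  change _ ∧ _ ∧ _ ↔ _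
  rw [compatible_comp_left_iff, compatible_comp_left_iff]
  refine and_congr_right fun hq => and_congr_right fun hq' => ?_
  dsimp only
  rw [← and_assoc, comp_step_or_eq_iff T1 T2 Y hq.1 hq'.1]
  simp only [comp, Prod.mk.injEq, and_assoc]

theorem step_comp_right_iff (q1 q1' : T1.Q) (q2 q2' : T2.Q) (q3 q3' : T3.Q) :
    (T1.comp (T2.comp T3 Y') (inlCriteria (P3 := P3) Y)).step (q1, (q2, q3)) (q1', (q2', q3')) ↔
      (compatible T1 T2 Y (q1, q2) ∧ compatible T2 T3 Y' (q2, q3)) ∧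
      (compatible T1 T2 Y (q1', q2') ∧ compatible T2 T3 Y' (q2', q3')) ∧
      (T1.step q1 q1' ∨ q1 = q1') ∧ (T2.step q2 q2' ∨ q2 = q2') ∧ (T3.step q3 q3' ∨ q3 = q3') ∧
      ¬(q1 = q1' ∧ q2 = q2' ∧ q3 = q3') := by
  change _ ∧ _ ∧ _ ↔ _
  rw [compatible_comp_right_iff, compatible_comp_right_iff]
  refine and_congr_right fun hq => and_congr_right fun hq' => ?_
  dsimp only
  rw [comp_step_or_eq_iff T2 T3 Y' hq.2 hq'.2]
  simp only [comp, Prod.mk.injEq, and_assoc]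

end Assoc

end PTS

/-- Synchronous composition of plain transition structures is associative up
to equivalence: `(T1 ∥_Y T2) ∥_{Y'} T3 ≡ T1 ∥_Y (T2 ∥_{Y'} T3)`, where in
each expression the criteria are regarded as criteria between the
appropriate inherited property sets. -/
theorem comp_assoc {V P1 P2 P3 : Type} (T1 : PTS V P1) (T2 : PTS V P2)
    (T3 : PTS V P3) (Y : Set (P1 × P2)) (Y' : Set (P2 × P3)) :
    ((T1.comp T2 Y).comp T3
      {pp : (P1 ⊕ P2) × P3 | ∃ p2 p3, (p2, p3) ∈ Y' ∧ pp = (Sum.inr p2, p3)}).Equiv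
    (T1.comp (T2.comp T3 Y')
      {pp : P1 × (P2 ⊕ P3) | ∃ p1 p2, (p1, p2) ∈ Y ∧ pp = (p1, Sum.inl p2)}) := by
  refine ⟨Equiv.prodAssoc T1.Q T2.Q T3.Q, Equiv.sumAssoc P1 P2 P3, ?_, ?_, ?_, rfl⟩
  · rintro ⟨⟨q1, q2⟩, q3⟩
    exact (PTS.compatible_comp_left_iff T1 T2 T3 Y Y' q1 q2 q3).trans
      (PTS.compatible_comp_right_iff T1 T2 T3 Y Y' q1 q2 q3).symm
  · rintro ⟨⟨q1, q2⟩, q3⟩ ⟨⟨q1', q2'⟩, q3'⟩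
    exact (PTS.step_comp_left_iff T1 T2 T3 Y Y' q1 q1' q2 q2' q3 q3').trans
      (PTS.step_comp_right_iff T1 T2 T3 Y Y' q1 q1' q2 q2' q3 q3').symm
  · rintro ((p1 | p2) | p3) ⟨⟨q1, q2⟩, q3⟩ <;> rfl
end

section
/- Every atomic egalitarian rewrite system can be transformed into a readable one over the same signature, equations, and memberships (changing only the set of rules) that induces the same half-rewrite relation. -/
/-- First-order terms over operators `Op` and variables `Var`. -/
inductive Trm (Op Var : Type) : Type
  | var : Var → Trm Op Var
  | app : Op → List (Trm Op Var) → Trm Op Var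

/-- Application of a substitution to a term. -/
def Trm.subst {Op Var : Type} (θ : Var → Trm Op Var) : Trm Op Var → Trm Op Var
  | .var x => θ x
  | .app f ts => .app f (ts.attach.map (fun t => t.1.subst θ))
  decreasing_by
    simp only [Trm.app.sizeOf_spec]
    have := List.sizeOf_lt_of_mem t.2
    omega

/-- A condition is a conjunction (list) of equational conditions `t = t'`
and membership conditions `t : s`. -/
abbrev Cond (Op Var SN : Type) := List ((Trm Op Var × Trm Op Var) ⊕ (Trm Op Var × SN))

/-- Satisfaction of a condition under a substitution, with respect to the
equational theory `eqE` and the membership (sorting) relation `memb`. -/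
def satC {Op Var SN : Type} (eqE : Trm Op Var → Trm Op Var → Prop)
    (memb : Trm Op Var → SN → Prop) (θ : Var → Trm Op Var)
    (c : Cond Op Var SN) : Prop :=
  ∀ x ∈ c,
    match x with
    | Sum.inl ab => eqE (ab.1.subst θ) (ab.2.subst θ)
    | Sum.inr as => memb (as.1.subst θ) as.2

/-- A rule `t —ℓ→ t' if C` of an atomic egalitarian rewrite system. -/
structure ERule (Op Var SN : Type) where
  lhs : Trm Op Var
  label : Trm Op Var
  rhs : Trm Op Var
  cond : Cond Op Var SN

/-- The half-rewrite relation induced by a set of egalitarian rules: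
`u → v` holds if some rule instance takes the state term `u` to the
transition term `v` (first half), or the transition term `u` to the state
term `v` (second half), all modulo `eqE`. -/
def halfRw {Op Var SN : Type} (eqE : Trm Op Var → Trm Op Var → Prop)
    (memb : Trm Op Var → SN → Prop) (Rules : Set (ERule Op Var SN))
    (u v : Trm Op Var) : Prop :=
  ∃ r ∈ Rules, ∃ θ, satC eqE memb θ r.cond ∧
    ((eqE u (r.lhs.subst θ) ∧ eqE v (r.label.subst θ)) ∨
     (eqE u (r.label.subst θ) ∧ eqE v (r.rhs.subst θ)))

/-- A rule is readable iff any two consecutive half rewrites performed with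
it (with substitutions `θ1`, `θ2`) can also be obtained using one single
substitution for both halves. -/
def Readable {Op Var SN : Type} (eqE : Trm Op Var → Trm Op Var → Prop)
    (memb : Trm Op Var → SN → Prop) (r : ERule Op Var SN) : Prop :=
  ∀ u v w θ1 θ2,
    satC eqE memb θ1 r.cond → eqE u (r.lhs.subst θ1) → eqE v (r.label.subst θ1) →
    satC eqE memb θ2 r.cond → eqE v (r.label.subst θ2) → eqE w (r.rhs.subst θ2) →
    ∃ θ, satC eqE memb θ r.cond ∧ eqE u (r.lhs.subst θ) ∧
      eqE v (r.label.subst θ) ∧ eqE w (r.rhs.subst θ)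

namespace EgalAux

variable {Op Var SN : Type}

theorem subst_app (θ : Var → Trm Op Var) (f : Op) (ts : List (Trm Op Var)) :
    Trm.subst θ (.app f ts) = .app f (ts.map (Trm.subst θ)) := by
  rw [Trm.subst]; simp

@[simp] theorem subst_var (θ : Var → Trm Op Var) (x : Var) :
    Trm.subst θ (.var x) = θ x := by rw [Trm.subst]

theorem subst_subst (σ θ : Var → Trm Op Var) :
    (t : Trm Op Var) → (t.subst σ).subst θ = t.subst (fun x => (σ x).subst θ)
  | .var x => by simp
  | .app f ts => by
    rw [subst_app, subst_app, subst_app, List.map_map]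
    congr 1
    apply List.map_congr_left
    intro t ht
    exact subst_subst σ θ t
  decreasing_by
    simp only [Trm.app.sizeOf_spec]
    have := List.sizeOf_lt_of_mem ht
    omega

/-- Renaming of variables in a term. -/
def ren (i : Var → Var) (t : Trm Op Var) : Trm Op Var := t.subst (fun x => .var (i x))

theorem ren_subst (i : Var → Var) (θ : Var → Trm Op Var) (t : Trm Op Var) :
    (ren i t).subst θ = t.subst (fun x => θ (i x)) := by
  rw [ren, subst_subst]; simp

/-- Renaming applied to a condition element. -/
def mapCE (i : Var → Var) :
    (Trm Op Var × Trm Op Var) ⊕ (Trm Op Var × SN) →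
    (Trm Op Var × Trm Op Var) ⊕ (Trm Op Var × SN) :=
  Sum.map (Prod.map (ren i) (ren i)) (Prod.map (ren i) id)

theorem satC_cons (eqE : Trm Op Var → Trm Op Var → Prop) (memb : Trm Op Var → SN → Prop)
    (θ : Var → Trm Op Var) (x) (c : Cond Op Var SN) :
    satC eqE memb θ (x :: c) ↔
      (match x with
        | Sum.inl ab => eqE (ab.1.subst θ) (ab.2.subst θ)
        | Sum.inr as => memb (as.1.subst θ) as.2) ∧ satC eqE memb θ c :=
  List.forall_mem_cons

theorem satC_append (eqE : Trm Op Var → Trm Op Var → Prop) (memb : Trm Op Var → SN → Prop)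
    (θ : Var → Trm Op Var) (c d : Cond Op Var SN) :
    satC eqE memb θ (c ++ d) ↔ satC eqE memb θ c ∧ satC eqE memb θ d :=
  List.forall_mem_append

theorem satC_map (eqE : Trm Op Var → Trm Op Var → Prop) (memb : Trm Op Var → SN → Prop)
    (θ : Var → Trm Op Var) (i : Var → Var) (c : Cond Op Var SN) :
    satC eqE memb θ (c.map (mapCE i)) ↔ satC eqE memb (fun x => θ (i x)) c := by
  unfold satC
  rw [List.forall_mem_map]
  constructor <;> intro h x hx <;> have := h x hx <;>
    rcases x with ab | as <;>
    simpa [mapCE, ren_subst] using this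

/-- First copy of the variables. -/
def i1 (e : Var ≃ (Var ⊕ Var) ⊕ Fin 3) (x : Var) : Var := e.symm (.inl (.inl x))
/-- Second copy of the variables. -/
def i2 (e : Var ≃ (Var ⊕ Var) ⊕ Fin 3) (x : Var) : Var := e.symm (.inl (.inr x))
/-- Three fresh variables. -/
def va (e : Var ≃ (Var ⊕ Var) ⊕ Fin 3) : Var := e.symm (.inr 0)
def vb (e : Var ≃ (Var ⊕ Var) ⊕ Fin 3) : Var := e.symm (.inr 1)
def vc (e : Var ≃ (Var ⊕ Var) ⊕ Fin 3) : Var := e.symm (.inr 2)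

def vec3 {α : Type} (p q s : α) (j : Fin 3) : α :=
  if j = 0 then p else if j = 1 then q else s

/-- Combination of two substitutions on the two variable copies, together
with prescribed values on the three fresh variables. -/
def comb (e : Var ≃ (Var ⊕ Var) ⊕ Fin 3) (σ τ : Var → Trm Op Var)
    (p q s : Trm Op Var) : Var → Trm Op Var :=
  fun x => match e x with
  | .inl (.inl y) => σ y
  | .inl (.inr y) => τ y
  | .inr j => vec3 p q s j

@[simp] theorem comb_i1 (e : Var ≃ (Var ⊕ Var) ⊕ Fin 3) (σ τ : Var → Trm Op Var)
    (p q s : Trm Op Var) (x : Var) : comb e σ τ p q s (i1 e x) = σ x := by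
  simp [comb, i1]

@[simp] theorem comb_i2 (e : Var ≃ (Var ⊕ Var) ⊕ Fin 3) (σ τ : Var → Trm Op Var)
    (p q s : Trm Op Var) (x : Var) : comb e σ τ p q s (i2 e x) = τ x := by
  simp [comb, i2]

@[simp] theorem comb_va (e : Var ≃ (Var ⊕ Var) ⊕ Fin 3) (σ τ : Var → Trm Op Var)
    (p q s : Trm Op Var) : comb e σ τ p q s (va e) = p := by
  simp [comb, va, vec3]

@[simp] theorem comb_vb (e : Var ≃ (Var ⊕ Var) ⊕ Fin 3) (σ τ : Var → Trm Op Var)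
    (p q s : Trm Op Var) : comb e σ τ p q s (vb e) = q := by
  simp [comb, vb, vec3]

@[simp] theorem comb_vc (e : Var ≃ (Var ⊕ Var) ⊕ Fin 3) (σ τ : Var → Trm Op Var)
    (p q s : Trm Op Var) : comb e σ τ p q s (vc e) = s := by
  simp [comb, vc, vec3]

/-- The readable rule associated to a rule. -/
def mkRule (e : Var ≃ (Var ⊕ Var) ⊕ Fin 3) (r : ERule Op Var SN) : ERule Op Var SN where
  lhs := .var (va e)
  label := .var (vb e)
  rhs := .var (vc e)
  cond :=
    .inl (.var (va e), ren (i1 e) r.lhs) ::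
    .inl (.var (vb e), ren (i1 e) r.label) ::
    .inl (.var (vb e), ren (i2 e) r.label) ::
    .inl (.var (vc e), ren (i2 e) r.rhs) ::
    (r.cond.map (mapCE (i1 e)) ++ r.cond.map (mapCE (i2 e)))

theorem satC_mkRule (eqE : Trm Op Var → Trm Op Var → Prop) (memb : Trm Op Var → SN → Prop)
    (e : Var ≃ (Var ⊕ Var) ⊕ Fin 3) (r : ERule Op Var SN) (θ : Var → Trm Op Var) :
    satC eqE memb θ (mkRule e r).cond ↔
      eqE (θ (va e)) (r.lhs.subst (fun x => θ (i1 e x))) ∧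
      eqE (θ (vb e)) (r.label.subst (fun x => θ (i1 e x))) ∧
      eqE (θ (vb e)) (r.label.subst (fun x => θ (i2 e x))) ∧
      eqE (θ (vc e)) (r.rhs.subst (fun x => θ (i2 e x))) ∧
      satC eqE memb (fun x => θ (i1 e x)) r.cond ∧
      satC eqE memb (fun x => θ (i2 e x)) r.cond := by
  show satC eqE memb θ (_ :: _ :: _ :: _ :: (_ ++ _)) ↔ _
  rw [satC_cons, satC_cons, satC_cons, satC_cons, satC_append, satC_map, satC_map]
  simp [ren_subst]

end EgalAux


/-- Every atomic egalitarian rewrite system can be transformed into a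
readable one over the same signature, equations and memberships (only the
set of rules changes) that induces the same half-rewrite relation. -/
theorem exists_readable_same_halfRw {Op Var SN : Type} [Infinite Var]
    (eqE : Trm Op Var → Trm Op Var → Prop)
    (memb : Trm Op Var → SN → Prop)
    (heq : Equivalence eqE)
    (hstable : ∀ (θ : Var → Trm Op Var) (a b : Trm Op Var),
      eqE a b → eqE (a.subst θ) (b.subst θ))
    (Rules : Set (ERule Op Var SN)) :
    ∃ Rules' : Set (ERule Op Var SN),
      (∀ r ∈ Rules', Readable eqE memb r) ∧
      (∀ u v, halfRw eqE memb Rules' u v ↔ halfRw eqE memb Rules u v) := by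
  classical
  open EgalAux in
  obtain ⟨e⟩ : Nonempty (Var ≃ (Var ⊕ Var) ⊕ Fin 3) := by
    rw [← Cardinal.eq]
    have h : Cardinal.aleph0 ≤ Cardinal.mk Var := Cardinal.infinite_iff.mp ‹_›
    simp only [Cardinal.mk_sum, Cardinal.lift_id, Cardinal.mk_fin]
    rw [Cardinal.add_eq_self h, Cardinal.add_eq_left h]
    exact le_trans (le_of_lt (Cardinal.nat_lt_aleph0 3)) h
  refine ⟨EgalAux.mkRule e '' Rules, ?_, ?_⟩
  · -- readability
    rintro r' ⟨r, hr, rfl⟩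
    intro u v w θ1 θ2 hs1 hu hv hs2 hv2 hw
    rw [EgalAux.satC_mkRule] at hs1 hs2
    obtain ⟨a1, a2, a3, a4, a5, a6⟩ := hs1
    obtain ⟨b1, b2, b3, b4, b5, b6⟩ := hs2
    simp only [EgalAux.mkRule, EgalAux.subst_var] at hu hv hv2 hw
    refine ⟨EgalAux.comb e (fun x => θ1 (EgalAux.i1 e x)) (fun x => θ2 (EgalAux.i2 e x))
      (θ1 (EgalAux.va e)) (θ1 (EgalAux.vb e)) (θ2 (EgalAux.vc e)), ?_, ?_, ?_, ?_⟩
    · rw [EgalAux.satC_mkRule]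
      simp only [EgalAux.comb_i1, EgalAux.comb_i2, EgalAux.comb_va, EgalAux.comb_vb,
        EgalAux.comb_vc]
      exact ⟨a1, a2, heq.trans (heq.trans (heq.symm hv) hv2) b3, b4, a5, b6⟩
    · simpa [EgalAux.mkRule] using hu
    · simpa [EgalAux.mkRule] using hv
    · simpa [EgalAux.mkRule] using hw
  · -- same half-rewrite relation
    intro u v
    constructor
    · rintro ⟨r', ⟨r, hr, rfl⟩, θ, hsat, hcase⟩
      rw [EgalAux.satC_mkRule] at hsat
      obtain ⟨a1, a2, a3, a4, a5, a6⟩ := hsat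
      simp only [EgalAux.mkRule, EgalAux.subst_var] at hcase
      rcases hcase with ⟨hu, hv⟩ | ⟨hu, hv⟩
      · exact ⟨r, hr, fun x => θ (EgalAux.i1 e x), a5,
          Or.inl ⟨heq.trans hu a1, heq.trans hv a2⟩⟩
      · exact ⟨r, hr, fun x => θ (EgalAux.i2 e x), a6,
          Or.inr ⟨heq.trans hu a3, heq.trans hv a4⟩⟩
    · rintro ⟨r, hr, θ, hsat, hcase⟩
      refine ⟨EgalAux.mkRule e r, ⟨r, hr, rfl⟩,
        EgalAux.comb e θ θ (r.lhs.subst θ) (r.label.subst θ) (r.rhs.subst θ), ?_, ?_⟩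
      · rw [EgalAux.satC_mkRule]
        simp only [EgalAux.comb_i1, EgalAux.comb_i2, EgalAux.comb_va, EgalAux.comb_vb,
          EgalAux.comb_vc]
        exact ⟨heq.refl _, heq.refl _, heq.refl _, heq.refl _, hsat, hsat⟩
      · simp only [EgalAux.mkRule, EgalAux.subst_var, EgalAux.comb_va, EgalAux.comb_vb,
          EgalAux.comb_vc]
        exact hcase
end

section
/- An atomic egalitarian rewrite system R is topmost if and only if its split split(R) is a topmost plain rewrite system. -/
/-- The proper-subterm relation. -/
inductive Trm.psub {Op Var : Type} : Trm Op Var → Trm Op Var → Prop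
  | child {t : Trm Op Var} {f : Op} {ts : List (Trm Op Var)} :
      t ∈ ts → Trm.psub t (.app f ts)
  | tail {u t : Trm Op Var} {f : Op} {ts : List (Trm Op Var)} :
      Trm.psub u t → t ∈ ts → Trm.psub u (.app f ts)

/-- An unlabelled rule `t → t' if C` of a plain rewrite system. -/
structure PRule (Op Var SN : Type) where
  lhs : Trm Op Var
  rhs : Trm Op Var
  cond : Cond Op Var SN

/-- The split of a set of egalitarian rules: each rule `t —ℓ→ t' if C`
yields the two plain rules `t → ℓ if C` and `ℓ → t' if C`. -/
def splitRules {Op Var SN : Type} (R : Set (ERule Op Var SN)) :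
    Set (PRule Op Var SN) :=
  {r' | ∃ r ∈ R, r' = ⟨r.lhs, r.label, r.cond⟩ ∨ r' = ⟨r.label, r.rhs, r.cond⟩}

/-- Half rewriting with egalitarian rules, allowed at any position. -/
inductive EgRw {Op Var SN : Type} (eqE : Trm Op Var → Trm Op Var → Prop)
    (memb : Trm Op Var → SN → Prop) (Rules : Set (ERule Op Var SN)) :
    Trm Op Var → Trm Op Var → Prop
  | fst {u v : Trm Op Var} (r : ERule Op Var SN) (hr : r ∈ Rules)
      (θ : Var → Trm Op Var) (hc : satC eqE memb θ r.cond)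
      (hu : eqE u (r.lhs.subst θ)) (hv : eqE v (r.label.subst θ)) :
      EgRw eqE memb Rules u v
  | snd {u v : Trm Op Var} (r : ERule Op Var SN) (hr : r ∈ Rules)
      (θ : Var → Trm Op Var) (hc : satC eqE memb θ r.cond)
      (hu : eqE u (r.label.subst θ)) (hv : eqE v (r.rhs.subst θ)) :
      EgRw eqE memb Rules u v
  | ctxt {t t' : Trm Op Var} (f : Op) (pre post : List (Trm Op Var)) :
      EgRw eqE memb Rules t t' →
      EgRw eqE memb Rules (.app f (pre ++ t :: post)) (.app f (pre ++ t' :: post))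

/-- Half rewriting with egalitarian rules, only at the top. -/
def EgRwTop {Op Var SN : Type} (eqE : Trm Op Var → Trm Op Var → Prop)
    (memb : Trm Op Var → SN → Prop) (Rules : Set (ERule Op Var SN))
    (u v : Trm Op Var) : Prop :=
  ∃ r ∈ Rules, ∃ θ, satC eqE memb θ r.cond ∧
    ((eqE u (r.lhs.subst θ) ∧ eqE v (r.label.subst θ)) ∨
     (eqE u (r.label.subst θ) ∧ eqE v (r.rhs.subst θ)))

/-- Rewriting with plain rules, allowed at any position. -/
inductive Rw {Op Var SN : Type} (eqE : Trm Op Var → Trm Op Var → Prop)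
    (memb : Trm Op Var → SN → Prop) (Rules : Set (PRule Op Var SN)) :
    Trm Op Var → Trm Op Var → Prop
  | top {u v : Trm Op Var} (r : PRule Op Var SN) (hr : r ∈ Rules)
      (θ : Var → Trm Op Var) (hc : satC eqE memb θ r.cond)
      (hu : eqE u (r.lhs.subst θ)) (hv : eqE v (r.rhs.subst θ)) :
      Rw eqE memb Rules u v
  | ctxt {t t' : Trm Op Var} (f : Op) (pre post : List (Trm Op Var)) :
      Rw eqE memb Rules t t' →
      Rw eqE memb Rules (.app f (pre ++ t :: post)) (.app f (pre ++ t' :: post))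

/-- Rewriting with plain rules, only at the top. -/
def RwTop {Op Var SN : Type} (eqE : Trm Op Var → Trm Op Var → Prop)
    (memb : Trm Op Var → SN → Prop) (Rules : Set (PRule Op Var SN))
    (u v : Trm Op Var) : Prop :=
  ∃ r ∈ Rules, ∃ θ, satC eqE memb θ r.cond ∧
    eqE u (r.lhs.subst θ) ∧ eqE v (r.rhs.subst θ)

/-- An atomic egalitarian rewrite system is topmost: no term of sort `Stage`
contains a proper subterm of sort `Stage`, and (half) rewrites are only
possible at the top of terms. -/
def EgTopmost {Op Var SN : Type} (hasSort : Trm Op Var → SN → Prop)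
    (SStage : SN) (eqE : Trm Op Var → Trm Op Var → Prop)
    (memb : Trm Op Var → SN → Prop) (Rules : Set (ERule Op Var SN)) : Prop :=
  (∀ t u : Trm Op Var, hasSort t SStage → Trm.psub u t → ¬ hasSort u SStage) ∧
  (∀ u v, EgRw eqE memb Rules u v → EgRwTop eqE memb Rules u v)

/-- A plain rewrite system is topmost: no term of its state sort contains a
proper subterm of that sort, and rewrites are only possible at the top of
terms.  (In the split system the state sort is the former `Stage` sort.) -/
def PlainTopmost {Op Var SN : Type} (hasSort : Trm Op Var → SN → Prop)
    (SState : SN) (eqE : Trm Op Var → Trm Op Var → Prop)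
    (memb : Trm Op Var → SN → Prop) (Rules : Set (PRule Op Var SN)) : Prop :=
  (∀ t u : Trm Op Var, hasSort t SState → Trm.psub u t → ¬ hasSort u SState) ∧
  (∀ u v, Rw eqE memb Rules u v → RwTop eqE memb Rules u v)

theorem egRw_iff_rw_split {Op Var SN : Type}
    (eqE : Trm Op Var → Trm Op Var → Prop)
    (memb : Trm Op Var → SN → Prop) (R : Set (ERule Op Var SN))
    (u v : Trm Op Var) :
    EgRw eqE memb R u v ↔ Rw eqE memb (splitRules R) u v := by
  constructor
  · intro h
    induction h with
    | fst r hr θ hc hu hv =>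
        exact Rw.top ⟨r.lhs, r.label, r.cond⟩ ⟨r, hr, Or.inl rfl⟩ θ hc hu hv
    | snd r hr θ hc hu hv =>
        exact Rw.top ⟨r.label, r.rhs, r.cond⟩ ⟨r, hr, Or.inr rfl⟩ θ hc hu hv
    | ctxt f pre post _ ih => exact Rw.ctxt f pre post ih
  · intro h
    induction h with
    | top r' hr' θ hc hu hv =>
        obtain ⟨r, hr, h | h⟩ := hr' <;> subst h
        · exact EgRw.fst r hr θ hc hu hv
        · exact EgRw.snd r hr θ hc hu hv
    | ctxt f pre post _ ih => exact EgRw.ctxt f pre post ih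

theorem egRwTop_iff_rwTop_split {Op Var SN : Type}
    (eqE : Trm Op Var → Trm Op Var → Prop)
    (memb : Trm Op Var → SN → Prop) (R : Set (ERule Op Var SN))
    (u v : Trm Op Var) :
    EgRwTop eqE memb R u v ↔ RwTop eqE memb (splitRules R) u v := by
  constructor
  · rintro ⟨r, hr, θ, hc, ⟨hu, hv⟩ | ⟨hu, hv⟩⟩
    · exact ⟨⟨r.lhs, r.label, r.cond⟩, ⟨r, hr, Or.inl rfl⟩, θ, hc, hu, hv⟩
    · exact ⟨⟨r.label, r.rhs, r.cond⟩, ⟨r, hr, Or.inr rfl⟩, θ, hc, hu, hv⟩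
  · rintro ⟨r', ⟨r, hr, h | h⟩, θ, hc, hu, hv⟩ <;> subst h
    · exact ⟨r, hr, θ, hc, Or.inl ⟨hu, hv⟩⟩
    · exact ⟨r, hr, θ, hc, Or.inr ⟨hu, hv⟩⟩

/-- An atomic egalitarian rewrite system is topmost iff its split is a
topmost plain rewrite system. -/
theorem egTopmost_iff_split_topmost {Op Var SN : Type}
    (hasSort : Trm Op Var → SN → Prop) (SStage : SN)
    (eqE : Trm Op Var → Trm Op Var → Prop)
    (memb : Trm Op Var → SN → Prop) (R : Set (ERule Op Var SN)) :
    EgTopmost hasSort SStage eqE memb R ↔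
      PlainTopmost hasSort SStage eqE memb (splitRules R) := by
  unfold EgTopmost PlainTopmost
  refine and_congr Iff.rfl ?_
  constructor
  · intro h u v hr
    exact (egRwTop_iff_rwTop_split ..).mp (h u v ((egRw_iff_rw_split ..).mpr hr))
  · intro h u v hr
    exact (egRwTop_iff_rwTop_split ..).mpr (h u v ((egRw_iff_rw_split ..).mp hr))
end

section
/- Synchronisation with an intermediate 'relation component' correctly enforces an arbitrary relation: given plain transition structures S1 with totally defined property p1 : Q1 → C1, S2 with totally defined property p2 : Q2 → C2, and a relation R ⊆ C1 × C2, define the component S_R whose states are the pairs (c1,c2) ∈ R, with every state adjacent to every state, and with properties π1((c1,c2)) = c1 and π2((c1,c2)) = c2. Then in the three-way composition of S1, S2, S_R under criteria {(p1,π1),(p2,π2)}, a triple ⟨q1,q2,(c1,c2)⟩ is a state if and only if p1(q1) = c1, p2(q2) = c2, and R(p1(q1), p2(q2)) holds; consequently the projection of reachable composite states onto Q1 × Q2 contains only pairs with R(p1(q1), p2(q2)). -/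
/-- The intermediate component enforcing a relation `R` between property
values: its states are the pairs in `R`, every state is adjacent to every
state, and the two projections are its (total) properties, indexed by
`Bool` (`true` for `π1`, `false` for `π2`). -/
def SR {V : Type} (R : V → V → Prop) (c0 : {c : V × V // R c.1 c.2}) :
    PTS V Bool where
  Q := {c : V × V // R c.1 c.2}
  isState _ := True
  step _ _ := True
  val b c := if b then some c.1.1 else some c.1.2
  init := c0

/-- Synchronisation with an intermediate relation component correctly
enforces an arbitrary relation `R`: a triple is a state of the three-way
composition iff the component property values match the projections of the
relation component's state (and hence are `R`-related); consequently every
reachable composite state projects to a pair whose property values are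
`R`-related. -/
theorem relation_component_correct {V P1 P2 : Type}
    (S1 : PTS V P1) (S2 : PTS V P2) (p1 : P1) (p2 : P2)
    (R : V → V → Prop) (c0 : {c : V × V // R c.1 c.2})
    (hall1 : ∀ q, S1.isState q) (hall2 : ∀ q, S2.isState q)
    (htot1 : ∀ q, (S1.val p1 q).isSome) (htot2 : ∀ q, (S2.val p2 q).isSome) :
    (∀ (q1 : S1.Q) (q2 : S2.Q) (c : {c : V × V // R c.1 c.2}),
      ((S1.comp S2 ∅).comp (SR R c0)
          {(Sum.inl p1, true), (Sum.inr p2, false)}).isState ((q1, q2), c) ↔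
        (S1.val p1 q1 = some c.1.1 ∧ S2.val p2 q2 = some c.1.2 ∧
          R c.1.1 c.1.2)) ∧
    (∀ s : ((S1.comp S2 ∅).comp (SR R c0)
        {(Sum.inl p1, true), (Sum.inr p2, false)}).Q,
      Relation.ReflTransGen
        ((S1.comp S2 ∅).comp (SR R c0)
          {(Sum.inl p1, true), (Sum.inr p2, false)}).step
        ((S1.comp S2 ∅).comp (SR R c0)
          {(Sum.inl p1, true), (Sum.inr p2, false)}).init s →
      ((S1.comp S2 ∅).comp (SR R c0)
          {(Sum.inl p1, true), (Sum.inr p2, false)}).isState s →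
      ∃ v1 v2, S1.val p1 s.1.1 = some v1 ∧ S2.val p2 s.1.2 = some v2 ∧
        R v1 v2) := by
  constructor
  · intro q1 q2 c
    constructor
    · rintro ⟨_, _, hY⟩
      obtain ⟨v1, hv1⟩ := Option.isSome_iff_exists.mp (htot1 q1)
      obtain ⟨v2, hv2⟩ := Option.isSome_iff_exists.mp (htot2 q2)
      have h1 := hY (Sum.inl p1, true) (by simp) v1 c.1.1 hv1 (by simp [SR])
      have h2 := hY (Sum.inr p2, false) (by simp) v2 c.1.2 hv2 (by simp [SR])
      exact ⟨h1 ▸ hv1, h2 ▸ hv2, c.2⟩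
    · rintro ⟨h1, h2, hR⟩
      refine ⟨⟨hall1 q1, hall2 q2, by simp⟩, trivial, ?_⟩
      rintro ⟨pp1, pp2⟩ hpp v1 v2 hv1 hv2
      simp only [Set.mem_insert_iff, Set.mem_singleton_iff, Prod.mk.injEq] at hpp
      rcases hpp with ⟨rfl, rfl⟩ | ⟨rfl, rfl⟩
      · simp only [PTS.comp, Sum.elim_inl] at hv1
        rw [h1] at hv1
        simp [SR] at hv2
        simp_all
      · simp only [PTS.comp, Sum.elim_inr] at hv1
        rw [h2] at hv1
        simp [SR] at hv2
        simp_all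
  · intro s _ hs
    obtain ⟨⟨q1, q2⟩, c⟩ := s
    obtain ⟨_, _, hY⟩ := hs
    obtain ⟨v1, hv1⟩ := Option.isSome_iff_exists.mp (htot1 q1)
    obtain ⟨v2, hv2⟩ := Option.isSome_iff_exists.mp (htot2 q2)
    have h1 := hY (Sum.inl p1, true) (by simp) v1 c.1.1 hv1 (by simp [SR])
    have h2 := hY (Sum.inr p2, false) (by simp) v2 c.1.2 hv2 (by simp [SR])
    exact ⟨v1, v2, hv1, hv2, h1 ▸ h2 ▸ c.2⟩
end
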